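/- Let f : ℝ^{2n} → ℂ be a smooth ℤ^{2n}-periodic function, k ≥ 1 an integer, τ a level-k test section, and m ∈ ℤ^n. Then the family p ↦ f̂_p((m+p)/k) · τ̃_{m+p}((m+p)/k) is summable over p ∈ ℤ^n. (This establishes the absolute convergence of the series (6.6) defining the pairing ⟨T_{f,k} σ_k^{[m]}, τ⟩ of the Toeplitz-type operator in real polarization.) -/

import Mathlib

noncomputable section

open MeasureTheory

/-- `ℝ^{2n}` written as pairs `(x, y)` with `x, y ∈ ℝ^n`. -/
abbrev En (n : ℕ) : Type := (Fin n → ℝ) × (Fin n → ℝ)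

/-- The unit cube `[0,1]^n ⊆ ℝ^n`. -/
def unitBox (n : ℕ) : Set (Fin n → ℝ) := Set.univ.pi fun _ => Set.Icc (0 : ℝ) 1

/-- The `p`-th fibrewise Fourier coefficient
`f̂_p(x) = ∫_{[0,1]^n} f(x,y) e^{-2π√-1⟨p,y⟩} dy` of a `ℤ^{2n}`-periodic function. -/
def fibFourier (n : ℕ) (f : En n → ℂ) (p : Fin n → ℤ) (x : Fin n → ℝ) : ℂ :=
  ∫ y in unitBox n, f (x, y) * Complex.exp (-(2 * (Real.pi : ℂ) * Complex.I *
    ((∑ i, (p i : ℝ) * y i : ℝ) : ℂ)))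

/-- A level-`k` test section: a smooth function on `ℝ^{2n}` with the quasi-periodicity
`τ(x+μ, y+ν) = e^{-2π√-1 k ⟨μ,y⟩} τ(x,y)` for all `μ, ν ∈ ℤ^n`. -/
def IsTestSection (n k : ℕ) (τ : En n → ℂ) : Prop :=
  ContDiff ℝ (⊤ : ℕ∞) τ ∧
  ∀ (μ ν : Fin n → ℤ) (x y : Fin n → ℝ),
    τ (x + (fun i => (μ i : ℝ)), y + (fun i => (ν i : ℝ))) =
      Complex.exp (-(2 * (Real.pi : ℂ) * Complex.I * (k : ℂ) *
        ((∑ i, (μ i : ℝ) * y i : ℝ) : ℂ))) * τ (x, y)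

/-- The `m`-th Weil–Brezin coefficient
`τ̃_m(x) = ∫_{[0,1]^n} e^{2π√-1⟨m,y⟩} τ(x,y) dy`. -/
def WB (n : ℕ) (τ : En n → ℂ) (m : Fin n → ℤ) (x : Fin n → ℝ) : ℂ :=
  ∫ y in unitBox n, Complex.exp (2 * (Real.pi : ℂ) * Complex.I *
    ((∑ i, (m i : ℝ) * y i : ℝ) : ℂ)) * τ (x, y)

open Pointwise

def eChar (n : ℕ) (p : Fin n → ℤ) (y : Fin n → ℝ) : ℂ :=
  Complex.exp (-(2 * (Real.pi : ℂ) * Complex.I * ((∑ i, (p i : ℝ) * y i : ℝ) : ℂ)))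

lemma norm_exp_real_mul_I (r : ℝ) (c : ℂ) (h : c = (r:ℂ) * Complex.I) :
    ‖Complex.exp c‖ = 1 := by
  rw [h, Complex.norm_exp_ofReal_mul_I]

lemma eChar_norm (n : ℕ) (p : Fin n → ℤ) (y : Fin n → ℝ) : ‖eChar n p y‖ = 1 := by
  refine norm_exp_real_mul_I (-(2 * Real.pi * (∑ i, (p i : ℝ) * y i))) _ ?_
  push_cast
  ring

lemma eChar_continuous (n : ℕ) (p : Fin n → ℤ) : Continuous (eChar n p) := by
  unfold eChar
  fun_prop

lemma eChar_add (n : ℕ) (p : Fin n → ℤ) (y h : Fin n → ℝ) :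
    eChar n p (y + h) = eChar n p y * eChar n p h := by
  unfold eChar
  rw [← Complex.exp_add]
  congr 1
  have : ∑ i, (p i : ℝ) * (y + h) i = (∑ i, (p i : ℝ) * y i) + ∑ i, (p i : ℝ) * h i := by
    rw [← Finset.sum_add_distrib]
    exact Finset.sum_congr rfl fun i _ => by simp [mul_add]
  rw [this]
  push_cast
  ring

lemma eChar_int (n : ℕ) (p : Fin n → ℤ) (ν : Fin n → ℤ) :
    eChar n p (fun i => (ν i : ℝ)) = 1 := by
  unfold eChar
  have h1 : ((∑ i, (p i : ℝ) * (ν i : ℝ)) : ℝ) = ((∑ i, p i * ν i : ℤ) : ℝ) := by push_cast; rfl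
  rw [h1]
  have := Complex.exp_int_mul_two_pi_mul_I (-(∑ i, p i * ν i))
  rw [← this]
  congr 1
  push_cast
  ring

lemma integral_shift {n : ℕ} (F : (Fin n → ℝ) → ℂ)
    (hper : ∀ (ν : Fin n → ℤ) (y : Fin n → ℝ), F (y + fun i => (ν i : ℝ)) = F y)
    (h : Fin n → ℝ) :
    ∫ y in unitBox n, F (y + h) = ∫ y in unitBox n, F y := by
  classical
  set b := Pi.basisFun ℝ (Fin n) with hb
  set D := ZSpan.fundamentalDomain b with hDdef
  have hD : D = Set.pi Set.univ fun _ : Fin n => Set.Ico (0:ℝ) 1 :=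
    ZSpan.fundamentalDomain_pi_basisFun
  -- ae equality of unitBox and D
  have hsub : D ⊆ unitBox n := by
    rw [hD]
    intro y hy i _
    exact ⟨(hy i trivial).1, le_of_lt (hy i trivial).2⟩
  have hnull : volume (unitBox n \ D) = 0 := by
    have hsub2 : unitBox n \ D ⊆ ⋃ i : Fin n, Function.eval i ⁻¹' {(1:ℝ)} := by
      intro y hy
      rw [hD] at hy
      obtain ⟨hy1, hy2⟩ := hy
      simp only [Set.mem_pi, Set.mem_univ, forall_true_left, not_forall] at hy2
      obtain ⟨i, hi⟩ := hy2
      have h1 := hy1 i trivial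
      refine Set.mem_iUnion.2 ⟨i, ?_⟩
      have : ¬ ((0:ℝ) ≤ y i ∧ y i < 1) := by simpa [Set.mem_Ico] using hi
      have : y i = 1 := by
        rcases lt_or_eq_of_le h1.2 with h | h
        · exact absurd ⟨h1.1, h⟩ this
        · exact h
      simpa [Function.eval] using this
    refine measure_mono_null hsub2 ?_
    refine measure_iUnion_null fun i => ?_
    rw [MeasureTheory.volume_pi]
    exact Measure.pi_hyperplane _ i 1
  have hae : unitBox n =ᵐ[volume] D := by
    rw [MeasureTheory.ae_eq_set]
    constructor
    · exact hnull
    · rw [Set.diff_eq_empty.2 hsub]; simp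
  -- G invariance
  set G := (Submodule.span ℤ (Set.range b)).toAddSubgroup with hG
  have hFinv : ∀ (g : G) (y : Fin n → ℝ), F (g +ᵥ y) = F y := by
    rintro ⟨v, hv⟩ y
    have : ∃ ν : Fin n → ℤ, v = fun i => (ν i : ℝ) := by
      refine Submodule.span_induction ?_ ?_ ?_ ?_ hv
      · rintro z ⟨i, rfl⟩
        refine ⟨Pi.single i 1, ?_⟩
        funext j
        by_cases hij : j = i <;> simp [hb, Pi.single_apply, Pi.basisFun_apply, hij]
      · exact ⟨0, by funext i; simp⟩
      · rintro z w - - ⟨ζ, rfl⟩ ⟨ω, rfl⟩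
        exact ⟨ζ + ω, by funext i; simp⟩
      · rintro c z - ⟨ζ, rfl⟩
        exact ⟨c • ζ, by funext i; push_cast; simp⟩
    obtain ⟨ν, rfl⟩ := this
    have : (fun i => ((ν i : ℝ))) +ᵥ y = y + fun i => (ν i : ℝ) := by
      funext i; simp [add_comm]
    rw [show ((⟨_, hv⟩ : G) +ᵥ y) = y + fun i => (ν i : ℝ) from this]
    exact hper ν y
  have hfund : IsAddFundamentalDomain G D := ZSpan.isAddFundamentalDomain' b volume
  haveI : Countable G := inferInstanceAs (Countable (Submodule.span ℤ (Set.range ⇑b)))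
  have hfund2 : IsAddFundamentalDomain G (h +ᵥ D) volume := hfund.vadd_of_comm h
  have step1 : ∫ y in unitBox n, F (y + h) = ∫ y in D, F (y + h) :=
    setIntegral_congr_set hae
  have hemb : MeasurableEmbedding (fun y : Fin n → ℝ => h + y) :=
    (MeasurableEquiv.addLeft h).measurableEmbedding
  have step2 : ∫ z in (h +ᵥ D), F z = ∫ y in D, F (h + y) :=
    (measurePreserving_add_left volume h).setIntegral_image_emb hemb F D
  have step3 : ∫ z in (h +ᵥ D), F z = ∫ z in D, F z :=
    hfund2.setIntegral_eq hfund (fun g y => hFinv g y)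
  have step4 : ∫ y in unitBox n, F y = ∫ y in D, F y :=
    setIntegral_congr_set hae
  rw [step1, step4, ← step3, step2]
  congr 1
  funext y
  rw [add_comm]


lemma fib_shift {n : ℕ} (g : En n → ℂ)
    (hper : ∀ (μ ν : Fin n → ℤ) (x y : Fin n → ℝ),
      g (x + (fun i => (μ i : ℝ)), y + (fun i => (ν i : ℝ))) = g (x, y))
    (p : Fin n → ℤ) (x h : Fin n → ℝ) :
    ∫ y in unitBox n, g (x, y + h) * eChar n p y
      = Complex.exp (2 * (Real.pi : ℂ) * Complex.I * ((∑ i, (p i : ℝ) * h i : ℝ) : ℂ)) *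
        ∫ y in unitBox n, g (x, y) * eChar n p y := by
  set c : ℂ := Complex.exp (2 * (Real.pi : ℂ) * Complex.I * ((∑ i, (p i : ℝ) * h i : ℝ) : ℂ))
    with hc
  set F : (Fin n → ℝ) → ℂ := fun y => g (x, y) * eChar n p y with hF
  have hch : c * eChar n p h = 1 := by
    rw [hc]
    unfold eChar
    rw [← Complex.exp_add]
    simp
  have hFper : ∀ (ν : Fin n → ℤ) (y : Fin n → ℝ), F (y + fun i => (ν i : ℝ)) = F y := by
    intro ν y
    have hx0 : x + (fun i => (((0 : Fin n → ℤ) i : ℤ) : ℝ)) = x := by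
      funext i; simp
    have hg : g (x, y + fun i => (ν i : ℝ)) = g (x, y) := by
      have := hper 0 ν x y
      rwa [hx0] at this
    simp only [hF, hg, eChar_add, eChar_int, mul_one]
  have key : ∀ y, g (x, y + h) * eChar n p y = c * F (y + h) := by
    intro y
    simp only [hF, eChar_add]
    calc g (x, y + h) * eChar n p y
        = (c * eChar n p h) * (g (x, y + h) * eChar n p y) := by rw [hch, one_mul]
      _ = c * (g (x, y + h) * (eChar n p y * eChar n p h)) := by ring
  calc ∫ y in unitBox n, g (x, y + h) * eChar n p y
      = ∫ y in unitBox n, c * F (y + h) := by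
        exact setIntegral_congr_fun (by
          exact (MeasurableSet.univ_pi fun _ => measurableSet_Icc)) fun y _ => key y
    _ = c * ∫ y in unitBox n, F (y + h) := by rw [integral_const_mul]
    _ = c * ∫ y in unitBox n, F y := by rw [integral_shift F hFper h]

lemma exists_bound_of_periodic_norm {n : ℕ} {g : En n → ℂ} (hg : Continuous g)
    (hper : ∀ (μ ν : Fin n → ℤ) (x y : Fin n → ℝ),
      ‖g (x + (fun i => (μ i : ℝ)), y + (fun i => (ν i : ℝ)))‖ = ‖g (x, y)‖) :
    ∃ C, 0 ≤ C ∧ ∀ z, ‖g z‖ ≤ C := by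
  have hK : IsCompact ((unitBox n) ×ˢ (unitBox n)) :=
    (isCompact_univ_pi fun _ => isCompact_Icc).prod (isCompact_univ_pi fun _ => isCompact_Icc)
  have hne : ((unitBox n) ×ˢ (unitBox n)).Nonempty :=
    ⟨(fun _ => 0, fun _ => 0), ⟨fun i _ => ⟨le_refl 0, zero_le_one⟩,
      fun i _ => ⟨le_refl 0, zero_le_one⟩⟩⟩
  obtain ⟨z₀, hz₀, hmax⟩ := hK.exists_isMaxOn hne (continuous_norm.comp hg).continuousOn
  refine ⟨‖g z₀‖, norm_nonneg _, ?_⟩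
  rintro ⟨x, y⟩
  have hx : (fun i => Int.fract (x i)) + (fun i => ((⌊x i⌋ : ℤ) : ℝ)) = x := by
    funext i
    exact Int.fract_add_floor (x i)
  have hy : (fun i => Int.fract (y i)) + (fun i => ((⌊y i⌋ : ℤ) : ℝ)) = y := by
    funext i
    exact Int.fract_add_floor (y i)
  have key := hper (fun i => ⌊x i⌋) (fun i => ⌊y i⌋)
    (fun i => Int.fract (x i)) (fun i => Int.fract (y i))
  rw [hx, hy] at key
  rw [key]
  refine hmax ⟨fun i _ => ⟨Int.fract_nonneg _, (Int.fract_lt_one _).le⟩,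
    fun i _ => ⟨Int.fract_nonneg _, (Int.fract_lt_one _).le⟩⟩

def Dop (n : ℕ) (v : En n) (g : En n → ℂ) : En n → ℂ := fun z => fderiv ℝ g z v

lemma Dop_contDiff {n : ℕ} {g : En n → ℂ} (hg : ContDiff ℝ (⊤ : ℕ∞) g) (v : En n) :
    ContDiff ℝ (⊤ : ℕ∞) (Dop n v g) := by
  have h1 : ContDiff ℝ (⊤ : ℕ∞) (fderiv ℝ g) := hg.fderiv_right (by simp)
  exact (ContinuousLinearMap.apply ℝ ℂ v).contDiff.comp h1

lemma Dop_per {n : ℕ} {g : En n → ℂ} (hg : ContDiff ℝ (⊤ : ℕ∞) g)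
    (hper : ∀ (μ ν : Fin n → ℤ) (x y : Fin n → ℝ),
      g (x + (fun i => (μ i : ℝ)), y + (fun i => (ν i : ℝ))) = g (x, y)) (v : En n) :
    ∀ (μ ν : Fin n → ℤ) (x y : Fin n → ℝ),
      Dop n v g (x + (fun i => (μ i : ℝ)), y + (fun i => (ν i : ℝ))) = Dop n v g (x, y) := by
  intro μ ν x y
  set c : En n := ((fun i => (μ i : ℝ)), (fun i => (ν i : ℝ))) with hcd
  have hc : (fun w : En n => g (w + c)) = g := by
    funext w
    exact hper μ ν w.1 w.2
  have h1 : HasFDerivAt (fun w : En n => w + c) (ContinuousLinearMap.id ℝ (En n)) (x, y) :=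
    (hasFDerivAt_id _).add_const c
  have h2 : HasFDerivAt (fun w : En n => g (w + c)) (fderiv ℝ g ((x, y) + c)) (x, y) := by
    have := ((hg.differentiable (by simp) ((x, y) + c)).hasFDerivAt).comp (x, y) h1
    simpa [Function.comp_def] using this
  have h3 : fderiv ℝ g (x, y) = fderiv ℝ g ((x, y) + c) := by
    conv_lhs => rw [← hc]
    exact h2.fderiv
  show fderiv ℝ g ((x, y) + c) v = fderiv ℝ g (x, y) v
  rw [h3]

lemma unitBox_compact (n : ℕ) : IsCompact (unitBox n) :=
  isCompact_univ_pi fun _ => isCompact_Icc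

lemma fib_deriv {n : ℕ} (g : En n → ℂ) (hg : ContDiff ℝ (⊤ : ℕ∞) g)
    (hper : ∀ (μ ν : Fin n → ℤ) (x y : Fin n → ℝ),
      g (x + (fun i => (μ i : ℝ)), y + (fun i => (ν i : ℝ))) = g (x, y))
    (p : Fin n → ℤ) (x : Fin n → ℝ) (j : Fin n) :
    ∫ y in unitBox n, Dop n (0, Pi.single j 1) g (x, y) * eChar n p y
      = (2 * (Real.pi : ℂ) * Complex.I * (p j : ℂ)) *
        ∫ y in unitBox n, g (x, y) * eChar n p y := by
  classical
  set e : Fin n → ℝ := Pi.single j 1 with he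
  set v : En n := (0, e) with hv
  set μm := volume.restrict (unitBox n) with hμm
  haveI : IsFiniteMeasure μm := ⟨by
    rw [hμm, Measure.restrict_apply_univ]
    exact (unitBox_compact n).measure_lt_top⟩
  set F : ℝ → (Fin n → ℝ) → ℂ := fun t y => g (x, y + t • e) * eChar n p y with hF
  set F' : ℝ → (Fin n → ℝ) → ℂ := fun t y => Dop n v g (x, y + t • e) * eChar n p y with hF'
  obtain ⟨C, hC0, hC⟩ := exists_bound_of_periodic_norm (Dop_contDiff hg v).continuous
    (fun μ ν x' y' => congrArg norm (Dop_per hg hper v μ ν x' y'))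
  have hmeas : ∀ t : ℝ, AEStronglyMeasurable (F t) μm := by
    intro t
    exact ((hg.continuous.comp (continuous_const.prodMk
      (continuous_id.add continuous_const))).mul (eChar_continuous n p)).aestronglyMeasurable
  have hF_int : Integrable (F 0) μm := by
    have : ContinuousOn (F 0) (unitBox n) :=
      ((hg.continuous.comp (continuous_const.prodMk
        (continuous_id.add continuous_const))).mul (eChar_continuous n p)).continuousOn
    exact this.integrableOn_compact (unitBox_compact n)
  have hF'meas : AEStronglyMeasurable (F' 0) μm := by
    exact (((Dop_contDiff hg v).continuous.comp (continuous_const.prodMk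
      (continuous_id.add continuous_const))).mul (eChar_continuous n p)).aestronglyMeasurable
  have h_bound : ∀ᵐ y ∂μm, ∀ t ∈ Metric.ball (0:ℝ) 1, ‖F' t y‖ ≤ C := by
    refine Filter.Eventually.of_forall fun y t _ => ?_
    rw [hF']
    simp only [norm_mul, eChar_norm, mul_one]
    exact hC _
  have h_diff : ∀ᵐ y ∂μm, ∀ t ∈ Metric.ball (0:ℝ) 1, HasDerivAt (F · y) (F' t y) t := by
    refine Filter.Eventually.of_forall fun y t _ => ?_
    have h2 : HasDerivAt (fun t : ℝ => y + t • e) e t := by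
      simpa using ((hasDerivAt_id t).smul_const e).const_add y
    have hγ : HasDerivAt (fun t : ℝ => ((x, y + t • e) : En n)) ((0, e) : En n) t :=
      (hasDerivAt_const t x).prodMk h2
    have hgd : HasFDerivAt g (fderiv ℝ g (x, y + t • e)) (x, y + t • e) :=
      (hg.differentiable (by simp) _).hasFDerivAt
    exact (hgd.comp_hasDerivAt t hγ).mul_const (eChar n p y)
  have main := hasDerivAt_integral_of_dominated_loc_of_deriv_le (Metric.ball_mem_nhds 0 zero_lt_one)
    (Filter.Eventually.of_forall hmeas) hF_int hF'meas h_bound (integrable_const C) h_diff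
  set K := ∫ y in unitBox n, g (x, y) * eChar n p y with hK
  set c : ℂ := 2 * (Real.pi : ℂ) * Complex.I * (p j : ℂ) with hcdef
  have hphi : (fun t : ℝ => ∫ y, F t y ∂μm) = fun t : ℝ => Complex.exp (c * (t : ℂ)) * K := by
    funext t
    have hsum : (∑ i, (p i : ℝ) * (t • e) i) = (p j : ℝ) * t := by
      rw [Finset.sum_eq_single j]
      · simp [he]
      · intro i _ hij
        simp [he, Pi.single_apply, hij]
      · intro hj
        exact absurd (Finset.mem_univ j) hj
    have := fib_shift g hper p x (t • e)
    rw [hsum] at this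
    rw [hF]
    show (∫ y in unitBox n, g (x, y + t • e) * eChar n p y) = _
    rw [this]
    congr 2
    push_cast
    ring
  have h2 : HasDerivAt (fun t : ℝ => Complex.exp (c * (t : ℂ)) * K) (c * K) 0 := by
    have h0 : HasDerivAt (fun t : ℝ => (t : ℂ)) 1 0 := by
      exact (Complex.ofRealCLM.hasDerivAt (x := (0:ℝ))).congr_deriv (by simp)
    have h1 := ((h0.const_mul c).cexp).mul_const K
    simpa using h1
  have hmain2 : HasDerivAt (fun t : ℝ => Complex.exp (c * (t : ℂ)) * K) (∫ y, F' 0 y ∂μm) 0 := by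
    rw [← hphi]
    exact main.2
  have huniq : (∫ y, F' 0 y ∂μm) = c * K := hmain2.unique h2
  have hfin : (∫ y, F' 0 y ∂μm) = ∫ y in unitBox n, Dop n (0, Pi.single j 1) g (x, y) * eChar n p y := by
    rw [hμm, hF']
    congr 1
    funext y
    simp [hv, he]
  rw [← hfin, huniq]

def wfn (t : ℤ) : ℝ := ((1:ℝ) + (t:ℝ)^2)⁻¹

lemma wfn_pos (t : ℤ) : 0 < wfn t := by
  unfold wfn
  positivity

lemma wfn_zero : wfn 0 = 1 := by simp [wfn]

lemma unitBox_measurable (n : ℕ) : MeasurableSet (unitBox n) :=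
  MeasurableSet.univ_pi fun _ => measurableSet_Icc

lemma fib_base_bound {n : ℕ} {g : En n → ℂ} {C : ℝ} (hC : ∀ z, ‖g z‖ ≤ C)
    (p : Fin n → ℤ) (x : Fin n → ℝ) :
    ‖∫ y in unitBox n, g (x, y) * eChar n p y‖ ≤ C * (volume (unitBox n)).toReal := by
  refine norm_setIntegral_le_of_norm_le_const ((unitBox_compact n).measure_lt_top)
    fun y _ => ?_
  rw [norm_mul, eChar_norm, mul_one]
  exact hC _

lemma fib_decay_aux {n : ℕ} : ∀ (j : ℕ) (g : En n → ℂ), ContDiff ℝ (⊤ : ℕ∞) g →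
    (∀ (μ ν : Fin n → ℤ) (x y : Fin n → ℝ),
      g (x + (fun i => (μ i : ℝ)), y + (fun i => (ν i : ℝ))) = g (x, y)) →
    ∃ C, 0 ≤ C ∧ ∀ (p : Fin n → ℤ) (x : Fin n → ℝ),
      ‖∫ y in unitBox n, g (x, y) * eChar n p y‖ ≤
        C * ∏ i ∈ Finset.univ.filter (fun i : Fin n => (i : ℕ) < j), wfn (p i) := by
  intro j
  induction j with
  | zero =>
    intro g hg hper
    obtain ⟨C₀, hC₀0, hC₀⟩ := exists_bound_of_periodic_norm hg.continuous
      (fun μ ν x y => congrArg norm (hper μ ν x y))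
    refine ⟨C₀ * (volume (unitBox n)).toReal, by positivity, fun p x => ?_⟩
    have : Finset.univ.filter (fun i : Fin n => (i : ℕ) < 0) = ∅ := by
      ext i; simp
    rw [this, Finset.prod_empty, mul_one]
    exact fib_base_bound hC₀ p x
  | succ j ih =>
    intro g hg hper
    by_cases hjn : j < n
    · set i0 : Fin n := ⟨j, hjn⟩ with hi0
      set v : En n := (0, Pi.single i0 1) with hvd
      have hg1 : ContDiff ℝ (⊤ : ℕ∞) (Dop n v g) := Dop_contDiff hg v
      have hper1 := Dop_per hg hper v
      have hg2 : ContDiff ℝ (⊤ : ℕ∞) (Dop n v (Dop n v g)) := Dop_contDiff hg1 v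
      have hper2 := Dop_per hg1 hper1 v
      obtain ⟨C₁, hC₁0, hC₁⟩ := ih g hg hper
      obtain ⟨C₂, hC₂0, hC₂⟩ := ih (Dop n v (Dop n v g)) hg2 hper2
      refine ⟨max C₁ C₂, le_trans hC₁0 (le_max_left _ _), fun p x => ?_⟩
      have hfilter : Finset.univ.filter (fun i : Fin n => (i : ℕ) < j + 1)
          = insert i0 (Finset.univ.filter (fun i : Fin n => (i : ℕ) < j)) := by
        ext i
        simp only [Finset.mem_filter, Finset.mem_univ, true_and, Finset.mem_insert]
        constructor
        · intro hlt
          rcases Nat.lt_succ_iff_lt_or_eq.mp hlt with h | h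
          · exact Or.inr h
          · exact Or.inl (Fin.ext h)
        · rintro (rfl | h)
          · exact Nat.lt_succ_self j
          · exact Nat.lt_succ_of_lt h
      have hnotmem : i0 ∉ Finset.univ.filter (fun i : Fin n => (i : ℕ) < j) := by
        simp [hi0]
      rw [hfilter, Finset.prod_insert hnotmem]
      set P : ℝ := ∏ i ∈ Finset.univ.filter (fun i : Fin n => (i : ℕ) < j), wfn (p i) with hP
      have hPpos : 0 < P := Finset.prod_pos fun i _ => wfn_pos _
      by_cases hpj : p i0 = 0
      · rw [hpj, wfn_zero, one_mul]
        exact le_trans (hC₁ p x)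
          (mul_le_mul_of_nonneg_right (le_max_left _ _) hPpos.le)
      · have hder1 := fib_deriv g hg hper p x i0
        have hder2 := fib_deriv (Dop n v g) hg1 hper1 p x i0
        rw [← hvd] at hder1 hder2
        set c : ℂ := 2 * (Real.pi : ℂ) * Complex.I * ((p i0 : ℤ) : ℂ) with hcd
        set A := ∫ y in unitBox n, g (x, y) * eChar n p y with hA
        have hcc : (∫ y in unitBox n, Dop n v (Dop n v g) (x, y) * eChar n p y)
            = c * (c * A) := by
          rw [hder2, hder1]
        have hq1 : (1:ℝ) ≤ |((p i0 : ℤ) : ℝ)| := by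
          rw [← Int.cast_abs]
          exact_mod_cast Int.one_le_abs (by exact hpj)
        have hcnorm : ‖c‖ = 2 * Real.pi * |((p i0 : ℤ) : ℝ)| := by
          have : c = (((2 * Real.pi * ((p i0 : ℤ) : ℝ)) : ℝ) : ℂ) * Complex.I := by
            rw [hcd]; push_cast; ring
          rw [this, norm_mul, Complex.norm_I, mul_one, Complex.norm_real, Real.norm_eq_abs,
            abs_mul, abs_mul, abs_of_nonneg Real.pi_pos.le]
          norm_num
        have hcpos : 0 < ‖c‖ := by
          rw [hcnorm]
          positivity
        have hnorm2 : ‖∫ y in unitBox n, Dop n v (Dop n v g) (x, y) * eChar n p y‖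
            = ‖c‖^2 * ‖A‖ := by
          rw [hcc, ← mul_assoc, norm_mul, norm_mul, sq]
        have hkey : (‖c‖^2)⁻¹ ≤ wfn (p i0) := by
          unfold wfn
          have h1 : (0:ℝ) < 1 + ((p i0 : ℤ) : ℝ)^2 := by positivity
          refine inv_anti₀ h1 ?_
          rw [hcnorm]
          have hpi := Real.pi_gt_three
          have hq2 : (1:ℝ) ≤ ((p i0 : ℤ) : ℝ)^2 := by nlinarith [sq_abs ((p i0 : ℤ) : ℝ)]
          have hexp : (2 * Real.pi * |((p i0 : ℤ) : ℝ)|)^2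
              = 4 * Real.pi^2 * ((p i0 : ℤ) : ℝ)^2 := by
            rw [mul_pow, mul_pow, sq_abs]; ring
          rw [hexp]
          nlinarith [hq2, hpi, sq_nonneg (Real.pi - 3), sq_nonneg ((p i0 : ℤ) : ℝ)]
        have hAe : ‖A‖ = ‖∫ y in unitBox n, Dop n v (Dop n v g) (x, y) * eChar n p y‖ * (‖c‖^2)⁻¹ := by
          have hc2 : (‖c‖^2) ≠ 0 := by positivity
          rw [hnorm2, mul_comm (‖c‖^2) ‖A‖, mul_assoc, mul_inv_cancel₀ hc2, mul_one]
        calc ‖A‖ = ‖∫ y in unitBox n, Dop n v (Dop n v g) (x, y) * eChar n p y‖ * (‖c‖^2)⁻¹ := hAe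
          _ ≤ (C₂ * P) * (‖c‖^2)⁻¹ := by
              refine mul_le_mul_of_nonneg_right (hC₂ p x) (by positivity)
          _ ≤ (C₂ * P) * wfn (p i0) := by
              refine mul_le_mul_of_nonneg_left hkey (by positivity)
          _ ≤ max C₁ C₂ * (wfn (p i0) * P) := by
              have h := mul_le_mul_of_nonneg_right (le_max_right C₁ C₂)
                (mul_nonneg hPpos.le (wfn_pos (p i0)).le)
              calc (C₂ * P) * wfn (p i0) = C₂ * (P * wfn (p i0)) := by ring
                _ ≤ max C₁ C₂ * (P * wfn (p i0)) := h
                _ = max C₁ C₂ * (wfn (p i0) * P) := by ring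
    · obtain ⟨C₁, hC₁0, hC₁⟩ := ih g hg hper
      have hfilter : Finset.univ.filter (fun i : Fin n => (i : ℕ) < j + 1)
          = Finset.univ.filter (fun i : Fin n => (i : ℕ) < j) := by
        ext i
        have hi := i.isLt
        simp only [Finset.mem_filter, Finset.mem_univ, true_and]
        omega
      refine ⟨C₁, hC₁0, fun p x => ?_⟩
      rw [hfilter]
      exact hC₁ p x

lemma wfn_summable : Summable wfn := by
  have h2 : Summable (fun t : ℤ => 1 / (t : ℝ)^2) :=
    Real.summable_one_div_int_pow.mpr one_lt_two
  have h3 : Summable (fun t : ℤ => if t = 0 then (1:ℝ) else 0) :=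
    summable_of_ne_finset_zero (s := {0}) (fun t ht => by
      simp only [Finset.mem_singleton] at ht
      simp [ht])
  refine Summable.of_nonneg_of_le (fun t => (wfn_pos t).le) (fun t => ?_) (h2.add h3)
  by_cases ht : t = 0
  · subst ht
    simp [wfn_zero]
  · have h1 : (0:ℝ) < (t:ℝ)^2 := by
      have : ((t:ℝ)) ≠ 0 := Int.cast_ne_zero.mpr ht
      positivity
    simp only [ht, if_false, add_zero]
    rw [one_div]
    unfold wfn
    refine le_trans (inv_anti₀ h1 (by linarith)) (le_refl _)

lemma prod_wfn_summable : ∀ n : ℕ, Summable (fun p : Fin n → ℤ => ∏ i, wfn (p i)) := by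
  intro n
  induction n with
  | zero => exact Summable.of_finite
  | succ n ih =>
    have h1 : 0 ≤ wfn := fun t => (wfn_pos t).le
    have h2 : 0 ≤ (fun p : Fin n → ℤ => ∏ i, wfn (p i)) :=
      fun p => Finset.prod_nonneg fun i _ => (wfn_pos _).le
    have hmul := wfn_summable.mul_of_nonneg ih h1 h2
    rw [← Equiv.summable_iff (Fin.consEquiv (fun _ : Fin (n+1) => ℤ))]
    refine hmul.congr fun q => ?_
    show wfn q.1 * ∏ i, wfn (q.2 i) = ∏ i, wfn (((Fin.consEquiv (fun _ : Fin (n+1) => ℤ)) q) i)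
    rw [Fin.prod_univ_succ]
    simp [Fin.consEquiv]


lemma WB_bound {n k : ℕ} {τ : En n → ℂ} (hτ : IsTestSection n k τ) :
    ∃ C, 0 ≤ C ∧ ∀ (q : Fin n → ℤ) (x : Fin n → ℝ), ‖WB n τ q x‖ ≤ C := by
  obtain ⟨hsm, hq⟩ := hτ
  have hnorm : ∀ (μ ν : Fin n → ℤ) (x y : Fin n → ℝ),
      ‖τ (x + (fun i => (μ i : ℝ)), y + (fun i => (ν i : ℝ)))‖ = ‖τ (x, y)‖ := by
    intro μ ν x y
    rw [hq μ ν x y, norm_mul,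
      norm_exp_real_mul_I (-(2 * Real.pi * k * (∑ i, (μ i : ℝ) * y i))) _
        (by push_cast; ring), one_mul]
  obtain ⟨C, hC0, hC⟩ := exists_bound_of_periodic_norm hsm.continuous hnorm
  refine ⟨C * (volume (unitBox n)).toReal, by positivity, fun q x => ?_⟩
  refine norm_setIntegral_le_of_norm_le_const ((unitBox_compact n).measure_lt_top)
    fun y _ => ?_
  rw [norm_mul, norm_exp_real_mul_I (2 * Real.pi * (∑ i, (q i : ℝ) * y i)) _
    (by push_cast; ring), one_mul]
  exact hC _


/-- absolute convergence of the series defining the pairing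
`⟨T_{f,k} σ_k^{[m]}, τ⟩ = Σ_p (f̂_p · τ̃_{m+p})((m+p)/k)`. -/
theorem stmt10 (n k : ℕ) (hn : 0 < n) (hk : 1 ≤ k) (f : En n → ℂ)
    (hf : ContDiff ℝ (⊤ : ℕ∞) f)
    (hper : ∀ (μ ν : Fin n → ℤ) (x y : Fin n → ℝ),
      f (x + (fun i => (μ i : ℝ)), y + (fun i => (ν i : ℝ))) = f (x, y))
    (τ : En n → ℂ) (hτ : IsTestSection n k τ) (m : Fin n → ℤ) :
    Summable (fun p : Fin n → ℤ =>
      fibFourier n f p (fun i => ((m i + p i : ℤ) : ℝ) / k) *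
        WB n τ (m + p) (fun i => ((m i + p i : ℤ) : ℝ) / k)) := by
  obtain ⟨Cf, hCf0, hCf⟩ := fib_decay_aux n f hf hper
  obtain ⟨Cτ, hCτ0, hCτ⟩ := WB_bound hτ
  have huniv : Finset.univ.filter (fun i : Fin n => (i : ℕ) < n) = Finset.univ :=
    Finset.filter_true_of_mem fun i _ => i.isLt
  have hfib : ∀ (p : Fin n → ℤ) (x : Fin n → ℝ),
      fibFourier n f p x = ∫ y in unitBox n, f (x, y) * eChar n p y := fun p x => rfl
  apply Summable.of_norm
  refine Summable.of_nonneg_of_le (fun p => norm_nonneg _) (fun p => ?_)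
    (((prod_wfn_summable n).mul_left (Cf * Cτ)))
  rw [norm_mul]
  have h1 : ‖fibFourier n f p (fun i => ((m i + p i : ℤ) : ℝ) / k)‖ ≤ Cf * ∏ i, wfn (p i) := by
    rw [hfib]
    have := hCf p (fun i => ((m i + p i : ℤ) : ℝ) / k)
    rwa [huniv] at this
  have h2 : ‖WB n τ (m + p) (fun i => ((m i + p i : ℤ) : ℝ) / k)‖ ≤ Cτ := hCτ _ _
  have hprod : (0:ℝ) ≤ ∏ i, wfn (p i) := Finset.prod_nonneg fun i _ => (wfn_pos _).le
  calc ‖fibFourier n f p _‖ * ‖WB n τ (m + p) _‖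
      ≤ (Cf * ∏ i, wfn (p i)) * Cτ :=
        mul_le_mul h1 h2 (norm_nonneg _) (by positivity)
    _ = Cf * Cτ * ∏ i, wfn (p i) := by ring

end
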